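/- arXiv:1907.00266 — 3 statements merged into one kernel-verified Lean document; each statement's English description precedes it below -/
import Mathlib

section
/- Let the point set S of size mn be partitioned into n groups S_0,...,S_{n-1} of size m. Given an STS A on the set of groups, an STS B_i on each group S_i, and for each block {S_i,S_j,S_k} of A a transversal design T_B on the groups S_i,S_j,S_k, the union of all the B_i and all the T_B is a Steiner triple system of order mn. -/
/-- A Steiner triple system with point set `S` and block set `B`. -/
def IsSTS {α : Type*} [DecidableEq α] (S : Finset α) (B : Finset (Finset α)) : Prop :=
  (∀ b ∈ B, b ⊆ S ∧ b.card = 3) ∧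
  ∀ x ∈ S, ∀ y ∈ S, x ≠ y → ∃! b, b ∈ B ∧ x ∈ b ∧ y ∈ b

/-- A transversal design on the family of groups `Sg i`, `i ∈ a`: every block meets
every group `Sg i` (`i ∈ a`) in exactly one point, and any two points from different
groups lie in exactly one common block. -/
def IsTDon {α : Type*} {n : ℕ} [DecidableEq α] (Sg : Fin n → Finset α)
    (a : Finset (Fin n)) (T : Finset (Finset α)) : Prop :=
  (∀ b ∈ T, b ⊆ a.biUnion Sg ∧ ∀ i ∈ a, (b ∩ Sg i).card = 1) ∧
  (∀ i ∈ a, ∀ j ∈ a, i ≠ j → ∀ x ∈ Sg i, ∀ y ∈ Sg j,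
    ∃! b, b ∈ T ∧ x ∈ b ∧ y ∈ b)

/-- Let a point set of size `m * n` be partitioned into `n` pairwise disjoint groups
`Sg 0, …, Sg (n-1)` of size `m`.  Given an STS `A` on the set of groups, an STS `Bi i`
on each group `Sg i`, and for each block `a` of `A` a transversal design `T a` on the
groups belonging to `a`, the union of all the `Bi i` and all the `T a` is a Steiner
triple system of order `m * n` (on the whole point set). -/
theorem sts_product_construction {α : Type*} [DecidableEq α] (m n : ℕ)
    (Sg : Fin n → Finset α)
    (hdisj : ∀ i j : Fin n, i ≠ j → Disjoint (Sg i) (Sg j))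
    (hcard : ∀ i : Fin n, (Sg i).card = m)
    (A : Finset (Finset (Fin n))) (hA : IsSTS (Finset.univ : Finset (Fin n)) A)
    (Bi : Fin n → Finset (Finset α)) (hBi : ∀ i : Fin n, IsSTS (Sg i) (Bi i))
    (T : Finset (Fin n) → Finset (Finset α)) (hT : ∀ a ∈ A, IsTDon Sg a (T a)) :
    IsSTS ((Finset.univ : Finset (Fin n)).biUnion Sg)
      ((Finset.univ : Finset (Fin n)).biUnion Bi ∪ A.biUnion T) := by
  obtain ⟨hA1, hA2⟩ := hA
  have hgroup : ∀ (x : α) (i j : Fin n), x ∈ Sg i → x ∈ Sg j → i = j := by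
    intro x i j hi hj
    by_contra h
    exact (Finset.disjoint_left.1 (hdisj i j h)) hi hj
  constructor
  · intro b hb
    rcases Finset.mem_union.1 hb with hb | hb
    · obtain ⟨i, -, hbi⟩ := Finset.mem_biUnion.1 hb
      obtain ⟨hsub, hcard3⟩ := (hBi i).1 b hbi
      exact ⟨hsub.trans (Finset.subset_biUnion_of_mem Sg (Finset.mem_univ i)), hcard3⟩
    · obtain ⟨a, ha, hba⟩ := Finset.mem_biUnion.1 hb
      obtain ⟨hsub, hmeet⟩ := (hT a ha).1 b hba
      refine ⟨hsub.trans (Finset.biUnion_subset_biUnion_of_subset_left Sg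
        (Finset.subset_univ a)), ?_⟩
      have heq : b = a.biUnion (fun i => b ∩ Sg i) := by
        ext x
        simp only [Finset.mem_biUnion, Finset.mem_inter]
        constructor
        · intro hx
          obtain ⟨i, hia, hxi⟩ := Finset.mem_biUnion.1 (hsub hx)
          exact ⟨i, hia, hx, hxi⟩
        · rintro ⟨i, -, hx, -⟩; exact hx
      rw [heq, Finset.card_biUnion]
      · rw [Finset.sum_congr rfl hmeet, Finset.sum_const, smul_eq_mul, mul_one]
        exact (hA1 a ha).2
      · intro i hi j hj hij
        refine Finset.disjoint_left.2 fun x hx hx' => hij ?_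
        exact hgroup x i j (Finset.mem_inter.1 hx).2 (Finset.mem_inter.1 hx').2
  · intro x hx y hy hxy
    obtain ⟨i, -, hxi⟩ := Finset.mem_biUnion.1 hx
    obtain ⟨j, -, hyj⟩ := Finset.mem_biUnion.1 hy
    -- no T-block contains two distinct points of the same group
    have hTno : ∀ a ∈ A, ∀ c ∈ T a, ∀ k : Fin n, x ∈ c → y ∈ c →
        x ∈ Sg k → y ∈ Sg k → False := by
      intro a ha c hc k hxc hyc hxk hyk
      obtain ⟨hsub, hmeet⟩ := (hT a ha).1 c hc
      obtain ⟨k', hk'a, hxk'⟩ := Finset.mem_biUnion.1 (hsub hxc)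
      have : k' = k := hgroup x k' k hxk' hxk
      subst this
      have h2 : ({x, y} : Finset α) ⊆ c ∩ Sg k' := by
        intro z hz
        rcases Finset.mem_insert.1 hz with rfl | hz
        · exact Finset.mem_inter.2 ⟨hxc, hxk⟩
        · rw [Finset.mem_singleton.1 hz]
          exact Finset.mem_inter.2 ⟨hyc, hyk⟩
      have := Finset.card_le_card h2
      rw [Finset.card_pair hxy, hmeet k' hk'a] at this
      omega
    by_cases hij : i = j
    · subst hij
      obtain ⟨b0, ⟨hb0, hx0, hy0⟩, hb0u⟩ := (hBi i).2 x hxi y hyj hxy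
      refine ⟨b0, ⟨Finset.mem_union_left _
        (Finset.mem_biUnion.2 ⟨i, Finset.mem_univ i, hb0⟩), hx0, hy0⟩, ?_⟩
      rintro c ⟨hc, hxc, hyc⟩
      rcases Finset.mem_union.1 hc with hc | hc
      · obtain ⟨k, -, hck⟩ := Finset.mem_biUnion.1 hc
        have hxk : x ∈ Sg k := ((hBi k).1 c hck).1 hxc
        have : k = i := hgroup x k i hxk hxi
        subst this
        exact hb0u c ⟨hck, hxc, hyc⟩
      · obtain ⟨a, ha, hca⟩ := Finset.mem_biUnion.1 hc
        exact absurd (hTno a ha c hca i hxc hyc hxi hyj) (fun h => h)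
    · obtain ⟨a, ⟨haA, hia, hja⟩, hau⟩ :=
        hA2 i (Finset.mem_univ i) j (Finset.mem_univ j) hij
      obtain ⟨b0, ⟨hb0T, hxb0, hyb0⟩, hb0u⟩ :=
        (hT a haA).2 i hia j hja hij x hxi y hyj
      refine ⟨b0, ⟨Finset.mem_union_right _
        (Finset.mem_biUnion.2 ⟨a, haA, hb0T⟩), hxb0, hyb0⟩, ?_⟩
      rintro c ⟨hc, hxc, hyc⟩
      rcases Finset.mem_union.1 hc with hc | hc
      · obtain ⟨k, -, hck⟩ := Finset.mem_biUnion.1 hc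
        have hsub := ((hBi k).1 c hck).1
        have hik : i = k := hgroup x i k hxi (hsub hxc)
        have hjk : j = k := hgroup y j k hyj (hsub hyc)
        exact absurd (hik.trans hjk.symm) hij
      · obtain ⟨a', ha'A, hca'⟩ := Finset.mem_biUnion.1 hc
        obtain ⟨hsub, -⟩ := (hT a' ha'A).1 c hca'
        obtain ⟨k, hka', hxk⟩ := Finset.mem_biUnion.1 (hsub hxc)
        obtain ⟨l, hla', hyl⟩ := Finset.mem_biUnion.1 (hsub hyc)
        have hki : k = i := hgroup x k i hxk hxi
        have hlj : l = j := hgroup y l j hyl hyj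
        have : a' = a := hau a' ⟨ha'A, hki ▸ hka', hlj ▸ hla'⟩
        subst this
        exact hb0u c ⟨hca', hxc, hyc⟩
end

section
/- With the setup of the previous construction, if the STS A on the groups, each STS B_i, and each transversal design T_B are resolvable, then the resulting STS of order mn (the union of all B_i and all T_B) is resolvable. -/
/-- `R` is a resolution of the design with point set `S` and block set `B`. -/
def IsResolution {α : Type*} [DecidableEq α] (S : Finset α) (B : Finset (Finset α))
    (R : Finset (Finset (Finset α))) : Prop :=
  (∀ P ∈ R, P.Nonempty ∧ P ⊆ B ∧ ∀ x ∈ S, ∃! b, b ∈ P ∧ x ∈ b) ∧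
  ∀ b ∈ B, ∃! P, P ∈ R ∧ b ∈ P

/-- A design `(S, B)` is resolvable if it admits a resolution. -/
def IsResolvable {α : Type*} [DecidableEq α] (S : Finset α)
    (B : Finset (Finset α)) : Prop :=
  ∃ R : Finset (Finset (Finset α)), IsResolution S B R

lemma resolution_card {α : Type*} [DecidableEq α] {S : Finset α} {B : Finset (Finset α)}
    {R : Finset (Finset (Finset α))} (hR : IsResolution S B R) {x : α} (hx : x ∈ S) :
    R.card = (B.filter fun b => x ∈ b).card := by
  apply Finset.card_bij (fun P hP => ((hR.1 P hP).2.2 x hx).choose)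
  · intro P hP
    obtain ⟨⟨hb, hxb⟩, _⟩ := ((hR.1 P hP).2.2 x hx).choose_spec
    exact Finset.mem_filter.2 ⟨(hR.1 P hP).2.1 hb, hxb⟩
  · intro P₁ h₁ P₂ h₂ heq
    obtain ⟨⟨hb1, hx1⟩, _⟩ := ((hR.1 P₁ h₁).2.2 x hx).choose_spec
    obtain ⟨⟨hb2, hx2⟩, _⟩ := ((hR.1 P₂ h₂).2.2 x hx).choose_spec
    have hB : ((hR.1 P₁ h₁).2.2 x hx).choose ∈ B := (hR.1 P₁ h₁).2.1 hb1
    obtain ⟨P, _, hPu⟩ := hR.2 _ hB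
    rw [hPu P₁ ⟨h₁, hb1⟩, hPu P₂ ⟨h₂, heq ▸ hb2⟩]
  · intro b hb
    obtain ⟨hbB, hxb⟩ := Finset.mem_filter.1 hb
    obtain ⟨P, ⟨hPR, hbP⟩, _⟩ := hR.2 b hbB
    refine ⟨P, hPR, ?_⟩
    obtain ⟨⟨hb', hx'⟩, huniq⟩ := ((hR.1 P hPR).2.2 x hx).choose_spec
    exact (huniq b ⟨hbP, hxb⟩).symm

lemma sts_filter_card {α : Type*} [DecidableEq α] {S : Finset α} {B : Finset (Finset α)}
    (hB : IsSTS S B) {x : α} (hx : x ∈ S) :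
    2 * (B.filter fun b => x ∈ b).card = S.card - 1 := by
  have key : (B.filter fun b => x ∈ b).biUnion (fun b => b.erase x) = S.erase x := by
    ext y
    simp only [Finset.mem_biUnion, Finset.mem_filter, Finset.mem_erase]
    constructor
    · rintro ⟨b, ⟨hbB, hxb⟩, hy, hyb⟩
      exact ⟨hy, (hB.1 b hbB).1 hyb⟩
    · rintro ⟨hyx, hyS⟩
      obtain ⟨b, ⟨hbB, hxb, hyb⟩, _⟩ := hB.2 x hx y hyS (Ne.symm hyx)
      exact ⟨b, ⟨hbB, hxb⟩, hyx, hyb⟩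
  have hd : ∀ b₁ ∈ B.filter fun b => x ∈ b, ∀ b₂ ∈ B.filter fun b => x ∈ b,
      b₁ ≠ b₂ → Disjoint (b₁.erase x) (b₂.erase x) := by
    intro b₁ h₁ b₂ h₂ hne
    obtain ⟨hb1, hx1⟩ := Finset.mem_filter.1 h₁
    obtain ⟨hb2, hx2⟩ := Finset.mem_filter.1 h₂
    rw [Finset.disjoint_left]
    intro y hy1 hy2
    obtain ⟨hyx, hyb1⟩ := Finset.mem_erase.1 hy1
    obtain ⟨_, hyb2⟩ := Finset.mem_erase.1 hy2
    obtain ⟨b, _, hu⟩ := hB.2 x hx y ((hB.1 b₁ hb1).1 hyb1) (Ne.symm hyx)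
    exact hne ((hu b₁ ⟨hb1, hx1, hyb1⟩).trans (hu b₂ ⟨hb2, hx2, hyb2⟩).symm)
  have hcb := Finset.card_biUnion hd
  rw [key, Finset.card_erase_of_mem hx] at hcb
  rw [hcb]
  rw [Finset.sum_congr rfl (fun b hb => ?_), Finset.sum_const, smul_eq_mul, mul_comm]
  obtain ⟨hbB, hxb⟩ := Finset.mem_filter.1 hb
  rw [Finset.card_erase_of_mem hxb, (hB.1 b hbB).2]

lemma td_filter_card {α : Type*} {n : ℕ} [DecidableEq α] {Sg : Fin n → Finset α}
    {a : Finset (Fin n)} {T : Finset (Finset α)} (hT : IsTDon Sg a T)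
    {i j : Fin n} (hi : i ∈ a) (hj : j ∈ a) (hij : i ≠ j) {x : α} (hx : x ∈ Sg i) :
    (T.filter fun b => x ∈ b).card = (Sg j).card := by
  symm
  apply Finset.card_bij (fun y hy => (hT.2 i hi j hj hij x hx y hy).choose)
  · intro y hy
    obtain ⟨⟨hbT, hxb, _⟩, _⟩ := (hT.2 i hi j hj hij x hx y hy).choose_spec
    exact Finset.mem_filter.2 ⟨hbT, hxb⟩
  · intro y₁ h₁ y₂ h₂ heq
    obtain ⟨⟨hbT1, hxb1, hyb1⟩, _⟩ := (hT.2 i hi j hj hij x hx y₁ h₁).choose_spec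
    obtain ⟨⟨hbT2, hxb2, hyb2⟩, _⟩ := (hT.2 i hi j hj hij x hx y₂ h₂).choose_spec
    have h1 : ((hT.2 i hi j hj hij x hx y₁ h₁).choose ∩ Sg j).card ≤ 1 :=
      le_of_eq ((hT.1 _ hbT1).2 j hj)
    refine Finset.card_le_one.1 h1 y₁ (Finset.mem_inter.2 ⟨hyb1, h₁⟩) y₂
      (Finset.mem_inter.2 ⟨heq ▸ hyb2, h₂⟩)
  · intro b hb
    obtain ⟨hbT, hxb⟩ := Finset.mem_filter.1 hb
    obtain ⟨y, hy⟩ := Finset.card_eq_one.1 ((hT.1 b hbT).2 j hj)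
    have hyb : y ∈ b ∩ Sg j := hy ▸ Finset.mem_singleton_self y
    obtain ⟨hyb', hySg⟩ := Finset.mem_inter.1 hyb
    exact ⟨y, hySg, ((hT.2 i hi j hj hij x hx y hySg).choose_spec.2 b ⟨hbT, hxb, hyb'⟩).symm⟩


/-- If, in the product construction (point set of size `m * n` partitioned into `n`
groups of size `m`, an STS `A` on the groups, an STS `Bi i` on each group, and a TD
`T a` on the groups of each block `a` of `A`), the STS `A`, each `Bi i`, and each
`T a` are resolvable, then the resulting STS of order `m * n` — the union of all the
`Bi i` and all the `T a` — is resolvable. -/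
theorem sts_product_construction_resolvable {α : Type*} [DecidableEq α] (m n : ℕ)
    (Sg : Fin n → Finset α)
    (hdisj : ∀ i j : Fin n, i ≠ j → Disjoint (Sg i) (Sg j))
    (hcard : ∀ i : Fin n, (Sg i).card = m)
    (A : Finset (Finset (Fin n))) (hA : IsSTS (Finset.univ : Finset (Fin n)) A)
    (Bi : Fin n → Finset (Finset α)) (hBi : ∀ i : Fin n, IsSTS (Sg i) (Bi i))
    (T : Finset (Fin n) → Finset (Finset α)) (hT : ∀ a ∈ A, IsTDon Sg a (T a))
    (hAres : IsResolvable (Finset.univ : Finset (Fin n)) A)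
    (hBres : ∀ i : Fin n, IsResolvable (Sg i) (Bi i))
    (hTres : ∀ a ∈ A, IsResolvable (a.biUnion Sg) (T a)) :
    IsResolvable ((Finset.univ : Finset (Fin n)).biUnion Sg)
      ((Finset.univ : Finset (Fin n)).biUnion Bi ∪ A.biUnion T) := by
  classical
  by_cases hSne : ((Finset.univ : Finset (Fin n)).biUnion Sg).Nonempty
  case neg =>
    refine ⟨∅, fun P hP => absurd hP (Finset.notMem_empty P), fun b hb => ?_⟩
    exfalso
    apply hSne
    rcases Finset.mem_union.1 hb with hb | hb
    · obtain ⟨i, _, hbi⟩ := Finset.mem_biUnion.1 hb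
      have h3 := (hBi i).1 b hbi
      obtain ⟨x, hx⟩ := Finset.card_pos.1 (h3.2 ▸ (by norm_num : (0:ℕ) < 3))
      exact ⟨x, Finset.mem_biUnion.2 ⟨i, Finset.mem_univ i, h3.1 hx⟩⟩
    · obtain ⟨a, haA, hba⟩ := Finset.mem_biUnion.1 hb
      have ha3 := (hA.1 a haA).2
      obtain ⟨i, hi⟩ := Finset.card_pos.1 (ha3 ▸ (by norm_num : (0:ℕ) < 3))
      obtain ⟨x, hx⟩ := Finset.card_pos.1 (((hT a haA).1 b hba).2 i hi ▸ (by norm_num : (0:ℕ) < 1))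
      exact ⟨x, Finset.mem_biUnion.2 ⟨i, Finset.mem_univ i, (Finset.mem_inter.1 hx).2⟩⟩
  case pos =>
  obtain ⟨x0, hx0⟩ := hSne
  obtain ⟨i0, -, hx0i⟩ := Finset.mem_biUnion.1 hx0
  have hm : 0 < m := hcard i0 ▸ Finset.card_pos.2 ⟨x0, hx0i⟩
  have hSgne : ∀ i : Fin n, (Sg i).Nonempty := fun i => Finset.card_pos.1 ((hcard i).symm ▸ hm)
  obtain ⟨RA, hRA⟩ := hAres
  choose RB hRB using hBres
  have hTres' : ∀ a, ∃ R, a ∈ A → IsResolution (a.biUnion Sg) (T a) R := by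
    intro a
    by_cases h : a ∈ A
    · exact ⟨(hTres a h).choose, fun _ => (hTres a h).choose_spec⟩
    · exact ⟨∅, fun h' => absurd h' h⟩
  choose RT hRT using hTres'
  -- cardinalities
  set k := (m - 1) / 2 with hkdef
  have hkB : ∀ i, (RB i).card = k := by
    intro i
    obtain ⟨x, hx⟩ := hSgne i
    have h1 := resolution_card (hRB i) hx
    have h2 := sts_filter_card (hBi i) hx
    rw [hcard i] at h2
    omega
  have hgroups : ∀ a ∈ A, ∃ i ∈ a, ∃ j ∈ a, i ≠ j := by
    intro a ha
    exact Finset.one_lt_card.1 (by rw [(hA.1 a ha).2]; norm_num)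
  have hkT : ∀ a ∈ A, (RT a).card = m := by
    intro a ha
    obtain ⟨i, hi, j, hj, hij⟩ := hgroups a ha
    obtain ⟨x, hx⟩ := hSgne i
    have h1 := resolution_card (hRT a ha) (Finset.mem_biUnion.2 ⟨i, hi, hx⟩)
    rw [h1, td_filter_card (hT a ha) hi hj hij hx, hcard j]
  -- class enumeration functions
  set cB : Fin n → ℕ → Finset (Finset α) := fun i s =>
    if h : s < (RB i).card then ((RB i).equivFin.symm ⟨s, h⟩ : { x // x ∈ RB i }) else ∅
    with hcBdef
  set cT : Finset (Fin n) → ℕ → Finset (Finset α) := fun a t =>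
    if h : t < (RT a).card then ((RT a).equivFin.symm ⟨t, h⟩ : { x // x ∈ RT a }) else ∅
    with hcTdef
  have memB : ∀ i, ∀ s < k, cB i s ∈ RB i := by
    intro i s hs
    rw [hcBdef]
    simp only
    rw [dif_pos (by rw [hkB i]; exact hs)]
    exact Subtype.mem _
  have injB : ∀ i, ∀ s₁ < k, ∀ s₂ < k, cB i s₁ = cB i s₂ → s₁ = s₂ := by
    intro i s₁ h₁ s₂ h₂ heq
    rw [hcBdef] at heq
    simp only at heq
    rw [dif_pos (by rw [hkB i]; exact h₁), dif_pos (by rw [hkB i]; exact h₂)] at heq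
    have := (RB i).equivFin.symm.injective (Subtype.coe_injective heq)
    exact Fin.mk.inj_iff.1 this
  have surjB : ∀ i, ∀ P ∈ RB i, ∃ s < k, cB i s = P := by
    intro i P hP
    refine ⟨((RB i).equivFin ⟨P, hP⟩ : Fin _), by rw [← hkB i]; exact ((RB i).equivFin ⟨P, hP⟩).2, ?_⟩
    rw [hcBdef]
    simp only
    rw [dif_pos ((RB i).equivFin ⟨P, hP⟩).2]

    rw [Fin.eta, Equiv.symm_apply_apply]
  have memT : ∀ a ∈ A, ∀ t < m, cT a t ∈ RT a := by
    intro a ha t ht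
    rw [hcTdef]
    simp only
    rw [dif_pos (by rw [hkT a ha]; exact ht)]
    exact Subtype.mem _
  have injT : ∀ a ∈ A, ∀ t₁ < m, ∀ t₂ < m, cT a t₁ = cT a t₂ → t₁ = t₂ := by
    intro a ha t₁ h₁ t₂ h₂ heq
    rw [hcTdef] at heq
    simp only at heq
    rw [dif_pos (by rw [hkT a ha]; exact h₁), dif_pos (by rw [hkT a ha]; exact h₂)] at heq
    have := (RT a).equivFin.symm.injective (Subtype.coe_injective heq)
    exact Fin.mk.inj_iff.1 this
  have surjT : ∀ a ∈ A, ∀ P ∈ RT a, ∃ t < m, cT a t = P := by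
    intro a ha P hP
    refine ⟨((RT a).equivFin ⟨P, hP⟩ : Fin _), by rw [← hkT a ha]; exact ((RT a).equivFin ⟨P, hP⟩).2, ?_⟩
    rw [hcTdef]
    simp only
    rw [dif_pos ((RT a).equivFin ⟨P, hP⟩).2]

    rw [Fin.eta, Equiv.symm_apply_apply]
  -- the classes
  set DD : ℕ → Finset (Finset α) := fun s => Finset.univ.biUnion (fun i => cB i s) with hDDdef
  set CC : Finset (Finset (Fin n)) → ℕ → Finset (Finset α) :=
    fun Q t => Q.biUnion (fun a => cT a t) with hCCdef
  set R : Finset (Finset (Finset α)) :=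
    (Finset.range k).image DD ∪ RA.biUnion (fun Q => (Finset.range m).image (CC Q)) with hRdef
  -- helper facts on blocks
  have factB : ∀ i (b : Finset α), b ∈ Bi i → b ⊆ Sg i ∧ b.Nonempty :=
    fun i b hb => ⟨((hBi i).1 b hb).1,
      Finset.card_pos.1 (((hBi i).1 b hb).2 ▸ (by norm_num : (0:ℕ) < 3))⟩
  have factBB : ∀ i j (b : Finset α), b ∈ Bi i → b ∈ Bi j → i = j := by
    intro i j b hbi hbj
    by_contra hne
    obtain ⟨x, hx⟩ := (factB i b hbi).2
    exact Finset.disjoint_left.1 (hdisj i j hne) ((factB i b hbi).1 hx) ((factB j b hbj).1 hx)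
  have factBT : ∀ i, ∀ a ∈ A, ∀ (b : Finset α), b ∈ Bi i → b ∈ T a → False := by
    intro i a ha b hbi hbt
    obtain ⟨j, hj, hji⟩ := Finset.exists_mem_ne (by rw [(hA.1 a ha).2]; norm_num) i
    obtain ⟨x, hx⟩ := Finset.card_pos.1 (((hT a ha).1 b hbt).2 j hj ▸ (by norm_num : (0:ℕ) < 1))
    obtain ⟨hxb, hxj⟩ := Finset.mem_inter.1 hx
    exact Finset.disjoint_left.1 (hdisj j i hji) hxj ((factB i b hbi).1 hxb)
  have factTT : ∀ a ∈ A, ∀ a' ∈ A, ∀ (b : Finset α), b ∈ T a → b ∈ T a' → a = a' := by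
    intro a ha a' ha' b hba hba'
    have hsub : a' ⊆ a := by
      intro j hj
      obtain ⟨x, hx⟩ := Finset.card_pos.1 (((hT a' ha').1 b hba').2 j hj ▸ (by norm_num : (0:ℕ) < 1))
      obtain ⟨hxb, hxj⟩ := Finset.mem_inter.1 hx
      obtain ⟨j', hj', hxj'⟩ := Finset.mem_biUnion.1 (((hT a ha).1 b hba).1 hxb)
      have : j = j' := by
        by_contra hne
        exact Finset.disjoint_left.1 (hdisj j j' hne) hxj hxj'
      exact this ▸ hj'
    exact (Finset.eq_of_subset_of_card_le hsub
      (le_of_eq (((hA.1 a ha).2).trans ((hA.1 a' ha').2).symm))).symm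
  -- membership in a cB class forces the group
  have classBgroup : ∀ i, ∀ s < k, ∀ b ∈ cB i s, b ∈ Bi i :=
    fun i s hs b hb => ((hRB i).1 _ (memB i s hs)).2.1 hb
  have classTblock : ∀ a ∈ A, ∀ t < m, ∀ b ∈ cT a t, b ∈ T a :=
    fun a ha t ht b hb => ((hRT a ha).1 _ (memT a ha t ht)).2.1 hb
  refine ⟨R, ?_, ?_⟩
  · -- each class is a parallel class
    intro P hP
    rw [hRdef, Finset.mem_union] at hP
    rcases hP with hP | hP
    · -- P = DD s
      obtain ⟨s, hs, rfl⟩ := Finset.mem_image.1 hP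
      rw [Finset.mem_range] at hs
      refine ⟨?_, ?_, ?_⟩
      · obtain ⟨b, hb⟩ := ((hRB i0).1 _ (memB i0 s hs)).1
        exact ⟨b, Finset.mem_biUnion.2 ⟨i0, Finset.mem_univ i0, hb⟩⟩
      · intro b hb
        obtain ⟨i, -, hbi⟩ := Finset.mem_biUnion.1 hb
        exact Finset.mem_union_left _
          (Finset.mem_biUnion.2 ⟨i, Finset.mem_univ i, classBgroup i s hs b hbi⟩)
      · intro x hx
        obtain ⟨i, -, hxi⟩ := Finset.mem_biUnion.1 hx
        obtain ⟨b, ⟨hbP, hxb⟩, hbu⟩ := ((hRB i).1 _ (memB i s hs)).2.2 x hxi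
        refine ⟨b, ⟨Finset.mem_biUnion.2 ⟨i, Finset.mem_univ i, hbP⟩, hxb⟩, ?_⟩
        rintro b' ⟨hb', hxb'⟩
        obtain ⟨j, -, hbj⟩ := Finset.mem_biUnion.1 hb'
        have : j = i := by
          by_contra hne
          exact Finset.disjoint_left.1 (hdisj j i hne)
            ((factB j b' (classBgroup j s hs b' hbj)).1 hxb') hxi
        exact hbu b' ⟨this ▸ hbj, hxb'⟩
    · -- P = CC Q t
      obtain ⟨Q, hQ, hP⟩ := Finset.mem_biUnion.1 hP
      obtain ⟨t, ht, rfl⟩ := Finset.mem_image.1 hP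
      rw [Finset.mem_range] at ht
      have hQA : Q ⊆ A := ((hRA.1 Q hQ).2.1)
      refine ⟨?_, ?_, ?_⟩
      · obtain ⟨a, haQ⟩ := (hRA.1 Q hQ).1
        obtain ⟨b, hb⟩ := ((hRT a (hQA haQ)).1 _ (memT a (hQA haQ) t ht)).1
        exact ⟨b, Finset.mem_biUnion.2 ⟨a, haQ, hb⟩⟩
      · intro b hb
        obtain ⟨a, haQ, hba⟩ := Finset.mem_biUnion.1 hb
        exact Finset.mem_union_right _
          (Finset.mem_biUnion.2 ⟨a, hQA haQ, classTblock a (hQA haQ) t ht b hba⟩)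
      · intro x hx
        obtain ⟨i, -, hxi⟩ := Finset.mem_biUnion.1 hx
        obtain ⟨a, ⟨haQ, hia⟩, hau⟩ := (hRA.1 Q hQ).2.2 i (Finset.mem_univ i)
        have haA := hQA haQ
        obtain ⟨b, ⟨hbP, hxb⟩, hbu⟩ := ((hRT a haA).1 _ (memT a haA t ht)).2.2 x
          (Finset.mem_biUnion.2 ⟨i, hia, hxi⟩)
        refine ⟨b, ⟨Finset.mem_biUnion.2 ⟨a, haQ, hbP⟩, hxb⟩, ?_⟩
        rintro b' ⟨hb', hxb'⟩
        obtain ⟨a', ha'Q, hba'⟩ := Finset.mem_biUnion.1 hb'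
        have hbT' : b' ∈ T a' := classTblock a' (hQA ha'Q) t ht b' hba'
        obtain ⟨j, hja', hxj⟩ := Finset.mem_biUnion.1 (((hT a' (hQA ha'Q)).1 b' hbT').1 hxb')
        have hji : j = i := by
          by_contra hne
          exact Finset.disjoint_left.1 (hdisj j i hne) hxj hxi
        have : a' = a := hau a' ⟨ha'Q, hji ▸ hja'⟩
        exact hbu b' ⟨this ▸ hba', hxb'⟩
  · -- each block in exactly one class
    intro b hb
    rcases Finset.mem_union.1 hb with hb | hb
    · obtain ⟨i, -, hbi⟩ := Finset.mem_biUnion.1 hb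
      obtain ⟨P₀, ⟨hP₀, hbP₀⟩, hP₀u⟩ := (hRB i).2 b hbi
      obtain ⟨s, hs, hcBs⟩ := surjB i P₀ hP₀
      refine ⟨DD s, ⟨Finset.mem_union_left _ (Finset.mem_image.2 ⟨s, Finset.mem_range.2 hs, rfl⟩),
        Finset.mem_biUnion.2 ⟨i, Finset.mem_univ i, hcBs ▸ hbP₀⟩⟩, ?_⟩
      rintro P' ⟨hP'R, hbP'⟩
      rw [hRdef, Finset.mem_union] at hP'R
      rcases hP'R with hP' | hP'
      · obtain ⟨s', hs', rfl⟩ := Finset.mem_image.1 hP'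
        rw [Finset.mem_range] at hs'
        obtain ⟨j, -, hbj⟩ := Finset.mem_biUnion.1 hbP'
        have hij : j = i := factBB j i b (classBgroup j s' hs' b hbj) hbi
        have : cB i s' = P₀ := hP₀u _ ⟨memB i s' hs', hij ▸ hbj⟩
        have : s' = s := injB i s' hs' s hs (this.trans hcBs.symm)
        rw [this]
      · exfalso
        obtain ⟨Q, hQ, hP'⟩ := Finset.mem_biUnion.1 hP'
        obtain ⟨t, ht, rfl⟩ := Finset.mem_image.1 hP'
        rw [Finset.mem_range] at ht
        obtain ⟨a, haQ, hba⟩ := Finset.mem_biUnion.1 hbP'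
        have haA := ((hRA.1 Q hQ).2.1) haQ
        exact factBT i a haA b hbi (classTblock a haA t ht b hba)
    · obtain ⟨a, haA, hba⟩ := Finset.mem_biUnion.1 hb
      obtain ⟨P₀, ⟨hP₀, hbP₀⟩, hP₀u⟩ := (hRT a haA).2 b hba
      obtain ⟨t, ht, hcTt⟩ := surjT a haA P₀ hP₀
      obtain ⟨Q, ⟨hQ, haQ⟩, hQu⟩ := hRA.2 a haA
      refine ⟨CC Q t, ⟨Finset.mem_union_right _
        (Finset.mem_biUnion.2 ⟨Q, hQ, Finset.mem_image.2 ⟨t, Finset.mem_range.2 ht, rfl⟩⟩),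
        Finset.mem_biUnion.2 ⟨a, haQ, hcTt ▸ hbP₀⟩⟩, ?_⟩
      rintro P' ⟨hP'R, hbP'⟩
      rw [hRdef, Finset.mem_union] at hP'R
      rcases hP'R with hP' | hP'
      · exfalso
        obtain ⟨s', hs', rfl⟩ := Finset.mem_image.1 hP'
        rw [Finset.mem_range] at hs'
        obtain ⟨j, -, hbj⟩ := Finset.mem_biUnion.1 hbP'
        exact factBT j a haA b (classBgroup j s' hs' b hbj) hba
      · obtain ⟨Q', hQ', hP'⟩ := Finset.mem_biUnion.1 hP'
        obtain ⟨t', ht', rfl⟩ := Finset.mem_image.1 hP'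
        rw [Finset.mem_range] at ht'
        obtain ⟨a', ha'Q', hba'⟩ := Finset.mem_biUnion.1 hbP'
        have ha'A := ((hRA.1 Q' hQ').2.1) ha'Q'
        have haa : a' = a := factTT a' ha'A a haA b (classTblock a' ha'A t' ht' b hba') hba
        have hQQ : Q' = Q := hQu Q' ⟨hQ', haa ▸ ha'Q'⟩
        have : cT a t' = P₀ := hP₀u _ ⟨memT a haA t' ht', haa ▸ hba'⟩
        have htt : t' = t := injT a haA t' ht' t ht (this.trans hcTt.symm)
        rw [hQQ, htt]
end

section
/- For any t ≥ 0 and any T > 3 divisible by 3^t, there exists a permutation π of the T coordinates such that the subspaces G(T,t) and π(G(T,t)) of GF(3)^T intersect exactly in the one-dimensional subspace spanned by the all-one vector. -/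
/-- Row `j` of the defining matrix of `G(T,t)`: coordinate `i` carries the `j`-th
ternary digit of the lexicographic column index `i / (T / 3^t)` (each of the `3^t`
possible ternary columns of height `t` is repeated `T / 3^t` times). -/
def GRow (T t j : ℕ) : Fin T → ZMod 3 :=
  fun i => ((((i : ℕ) / (T / 3 ^ t)) / 3 ^ j : ℕ) : ZMod 3)

/-- The subspace `G(T,t)` of GF(3)^T: the span of the all-one vector together with the
rows of the `t × T` matrix whose columns are all `3^t` ternary columns of height `t`
in lexicographic order, each repeated `T / 3^t` times. -/
def GSpace (T t : ℕ) : Submodule (ZMod 3) (Fin T → ZMod 3) :=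
  Submodule.span (ZMod 3)
    (insert (fun _ => (1 : ZMod 3)) {v | ∃ j < t, v = GRow T t j})


def dgt (n j : ℕ) : ZMod 3 := ((n / 3 ^ j : ℕ) : ZMod 3)

lemma dgt_zero (j : ℕ) : dgt 0 j = 0 := by simp [dgt]

lemma three_zmod : ((3 : ℕ) : ZMod 3) = 0 := by decide
lemma three_zmod' : (3 : ZMod 3) = 0 := by decide

-- main digit lemma for k < l
lemma dgt_form_aux (u w k l j : ℕ) (hu : u < 3) (hw : w < 3) (hkl : k < l) :
    dgt (u * 3 ^ k + w * 3 ^ l) j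
      = (if j = k then (u : ZMod 3) else 0) + (if j = l then (w : ZMod 3) else 0) := by
  rcases le_or_gt j k with hjk | hjk
  · -- j ≤ k < l
    have h1 : u * 3 ^ k = (u * 3 ^ (k - j)) * 3 ^ j := by
      rw [mul_assoc, ← pow_add]; congr 2; omega
    have h2 : w * 3 ^ l = (w * 3 ^ (l - j)) * 3 ^ j := by
      rw [mul_assoc, ← pow_add]; congr 2; omega
    have hd : (u * 3 ^ k + w * 3 ^ l) / 3 ^ j = u * 3 ^ (k - j) + w * 3 ^ (l - j) := by
      rw [h1, h2, ← add_mul, Nat.mul_div_cancel _ (by positivity)]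
    rw [dgt, hd]
    push_cast [three_zmod, three_zmod']
    split_ifs with h1' h2' h2'
    · exfalso; omega
    · simp [(by omega : k - j = 0), zero_pow (by omega : l - j ≠ 0)]
    · exfalso; omega
    · simp [zero_pow (by omega : k - j ≠ 0), zero_pow (by omega : l - j ≠ 0)]
  · rcases le_or_gt j l with hjl | hjl
    · -- k < j ≤ l
      have h2 : w * 3 ^ l = (w * 3 ^ (l - j)) * 3 ^ j := by
        rw [mul_assoc, ← pow_add]; congr 2; omega
      have hsmall : u * 3 ^ k < 3 ^ j := by
        calc u * 3 ^ k < 3 * 3 ^ k := by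
              have := pow_pos (by norm_num : (0:ℕ) < 3) k; nlinarith
        _ = 3 ^ (k+1) := by ring
        _ ≤ 3 ^ j := Nat.pow_le_pow_right (by norm_num) (by omega)
      have hd : (u * 3 ^ k + w * 3 ^ l) / 3 ^ j = w * 3 ^ (l - j) := by
        rw [h2, Nat.add_mul_div_right _ _ (by positivity : 0 < 3 ^ j),
          Nat.div_eq_of_lt hsmall, zero_add]
      rw [dgt, hd]
      push_cast [three_zmod, three_zmod']
      split_ifs with h1' h2' h2'
      · exfalso; omega
      · exfalso; omega
      · simp [(by omega : l - j = 0)]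
      · simp [zero_pow (by omega : l - j ≠ 0)]
    · -- l < j
      have hsmall : u * 3 ^ k + w * 3 ^ l < 3 ^ j := by
        have hk3 : 3 ^ k ≤ 3 ^ (j-2) := Nat.pow_le_pow_right (by norm_num) (by omega)
        have hl3 : 3 ^ l ≤ 3 ^ (j-1) := Nat.pow_le_pow_right (by norm_num) (by omega)
        have h9 : 3 ^ (j-2) * 9 ≤ 3 ^ j := by
          rw [(by norm_num : (9:ℕ) = 3^2), ← pow_add]
          exact Nat.pow_le_pow_right (by norm_num) (by omega)
        have h31 : 3 ^ (j-1) = 3 ^ (j-2) * 3 := by rw [← pow_succ]; congr 1; omega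
        nlinarith [pow_pos (by norm_num : (0:ℕ) < 3) (j-2)]
      rw [dgt, Nat.div_eq_of_lt hsmall, if_neg (by omega : ¬ j = k),
        if_neg (by omega : ¬ j = l)]
      simp

lemma dgt_form (u w k l j : ℕ) (hu : u < 3) (hw : w < 3) (hkl : k ≠ l) :
    dgt (u * 3 ^ k + w * 3 ^ l) j
      = (if j = k then (u : ZMod 3) else 0) + (if j = l then (w : ZMod 3) else 0) := by
  rcases lt_or_gt_of_ne hkl with h | h
  · exact dgt_form_aux u w k l j hu hw h
  · rw [add_comm (u * 3 ^ k), add_comm (if j = k then (u:ZMod 3) else 0)]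
    exact dgt_form_aux w u l k j hw hu h

lemma dgt_single (u k j : ℕ) (hu : u < 3) :
    dgt (u * 3 ^ k) j = if j = k then (u : ZMod 3) else 0 := by
  have := dgt_form u 0 k (k+1) j hu (by norm_num) (by omega)
  simpa using this

-- 3^k + u*3^l is never v*3^j for u,v ∈ {1,2}, k ≠ l
lemma pow3_probe (k l j u v : ℕ) (hkl : k ≠ l) (hu : u = 1 ∨ u = 2)
    (hv : v = 1 ∨ v = 2) : 3 ^ k + u * 3 ^ l ≠ v * 3 ^ j := by
  intro h
  rcases lt_or_gt_of_ne hkl with hlt | hlt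
  · rcases le_or_gt j k with hj | hj
    · have h1 : (3:ℕ) ^ j ≤ 3 ^ k := Nat.pow_le_pow_right (by norm_num) hj
      have h2 : (3:ℕ) ^ k < 3 ^ l := Nat.pow_lt_pow_right (by norm_num) hlt
      rcases hu with rfl | rfl <;> rcases hv with rfl | rfl <;> omega
    · have hd1 : (3:ℕ) ^ (k+1) ∣ v * 3 ^ j :=
        Dvd.dvd.mul_left (pow_dvd_pow 3 (by omega)) v
      have hd2 : (3:ℕ) ^ (k+1) ∣ u * 3 ^ l :=
        Dvd.dvd.mul_left (pow_dvd_pow 3 (by omega)) u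
      have hd3 : (3:ℕ) ^ (k+1) ∣ 3 ^ k := by
        have h' := Nat.dvd_sub (h ▸ hd1) hd2
        rwa [Nat.add_sub_cancel] at h'
      have := Nat.le_of_dvd (pow_pos (by norm_num) k) hd3
      have h2 : (3:ℕ) ^ k < 3 ^ (k+1) := Nat.pow_lt_pow_right (by norm_num) (by omega)
      omega
  · rcases le_or_gt j l with hj | hj
    · have h1 : (3:ℕ) ^ j ≤ 3 ^ l := Nat.pow_le_pow_right (by norm_num) hj
      have h2 : (3:ℕ) ^ l < 3 ^ k := Nat.pow_lt_pow_right (by norm_num) hlt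
      rcases hu with rfl | rfl <;> rcases hv with rfl | rfl <;> omega
    · have hd1 : (3:ℕ) ^ (l+1) ∣ v * 3 ^ j :=
        Dvd.dvd.mul_left (pow_dvd_pow 3 (by omega)) v
      have hd2 : (3:ℕ) ^ (l+1) ∣ 3 ^ k := pow_dvd_pow 3 (by omega)
      have hd3 : (3:ℕ) ^ (l+1) ∣ u * 3 ^ l := by
        have h' := Nat.dvd_sub (h ▸ hd1) hd2
        rwa [Nat.add_sub_cancel_left] at h'
      have h4 := Nat.le_of_dvd (by rcases hu with rfl | rfl <;> positivity) hd3
      have h5 : (3:ℕ) ^ (l+1) = 3 * 3 ^ l := by rw [pow_succ]; ring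
      have h6 : (0:ℕ) < 3 ^ l := pow_pos (by norm_num) l
      rcases hu with rfl | rfl <;> omega

-- the swap function
def swapF (t m i : ℕ) : ℕ :=
  if i ∈ (Finset.range t).image (fun k => 3 ^ k * m) then 2 * i
  else if i ∈ (Finset.range t).image (fun k => 2 * (3 ^ k * m)) then i / 2
  else i

lemma mem_A_iff {t m i : ℕ} :
    i ∈ (Finset.range t).image (fun k => 3 ^ k * m) ↔ ∃ k < t, i = 3 ^ k * m := by
  simp [Finset.mem_image, eq_comm]

lemma mem_B_iff {t m i : ℕ} :
    i ∈ (Finset.range t).image (fun k => 2 * (3 ^ k * m)) ↔ ∃ k < t, i = 2 * (3 ^ k * m) := by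
  simp [Finset.mem_image, eq_comm]

lemma swapF_A {t m k : ℕ} (hk : k < t) : swapF t m (3 ^ k * m) = 2 * (3 ^ k * m) := by
  rw [swapF, if_pos (mem_A_iff.mpr ⟨k, hk, rfl⟩)]

lemma swapF_B {t m k : ℕ} (hk : k < t) (hm : 0 < m) :
    swapF t m (2 * (3 ^ k * m)) = 3 ^ k * m := by
  rw [swapF, if_neg, if_pos (mem_B_iff.mpr ⟨k, hk, rfl⟩), Nat.mul_div_cancel_left _ (by norm_num)]
  rw [mem_A_iff]
  rintro ⟨k', -, he⟩
  rw [← mul_assoc] at he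
  have h3 : 2 * 3 ^ k = 3 ^ k' := Nat.eq_of_mul_eq_mul_right hm he
  obtain ⟨c, hc⟩ : Odd ((3:ℕ) ^ k') := Odd.pow ⟨1, by norm_num⟩
  omega

lemma swapF_id {t m i : ℕ} (hA : ¬ ∃ k < t, i = 3 ^ k * m)
    (hB : ¬ ∃ k < t, i = 2 * (3 ^ k * m)) : swapF t m i = i := by
  rw [swapF, if_neg (fun h => hA (mem_A_iff.mp h)), if_neg (fun h => hB (mem_B_iff.mp h))]

lemma swapF_invol {t m : ℕ} (hm : 0 < m) (i : ℕ) : swapF t m (swapF t m i) = i := by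
  by_cases hA : i ∈ (Finset.range t).image (fun k => 3 ^ k * m)
  · obtain ⟨k, hk, rfl⟩ := mem_A_iff.mp hA
    rw [swapF_A hk, swapF_B hk hm]
  · by_cases hB : i ∈ (Finset.range t).image (fun k => 2 * (3 ^ k * m))
    · obtain ⟨k, hk, rfl⟩ := mem_B_iff.mp hB
      rw [swapF_B hk hm, swapF_A hk]
    · have hid : swapF t m i = i := by rw [swapF, if_neg hA, if_neg hB]
      rw [hid, hid]

lemma swapF_lt {t m i : ℕ} (hi : i < 3 ^ t * m) : swapF t m i < 3 ^ t * m := by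
  have hm : 0 < m := by
    rcases Nat.eq_zero_or_pos m with rfl | h
    · simp at hi
    · exact h
  rw [swapF]
  split_ifs with hA hB
  · obtain ⟨k, hk, rfl⟩ := mem_A_iff.mp hA
    have hlt : 2 * 3 ^ k < 3 ^ t := by
      have h1 : (3:ℕ) ^ (k+1) ≤ 3 ^ t := Nat.pow_le_pow_right (by norm_num) (by omega)
      have h2 : (3:ℕ) ^ (k+1) = 3 * 3 ^ k := by rw [pow_succ]; ring
      have h3 : (0:ℕ) < 3 ^ k := pow_pos (by norm_num) k
      omega
    calc 2 * (3 ^ k * m) = (2 * 3 ^ k) * m := by ring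
    _ < 3 ^ t * m := Nat.mul_lt_mul_of_lt_of_le hlt (le_refl m) hm
  · exact lt_of_le_of_lt (Nat.div_le_self _ _) hi
  · exact hi

lemma gspace_mem_iff {T t : ℕ} (f : Fin T → ZMod 3) :
    f ∈ GSpace T t ↔ ∃ c : ZMod 3, ∃ β : ℕ → ZMod 3,
      ∀ i : Fin T, f i = c + ∑ j ∈ Finset.range t, β j * dgt ((i : ℕ) / (T / 3 ^ t)) j := by
  constructor
  · intro hf
    induction hf using Submodule.span_induction with
    | mem x hx =>
      rcases Set.mem_insert_iff.mp hx with rfl | ⟨j, hj, rfl⟩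
      · exact ⟨1, 0, by simp⟩
      · refine ⟨0, fun j' => if j' = j then 1 else 0, fun i => ?_⟩
        simp [GRow, dgt, ite_mul, Finset.sum_ite_eq', hj]
    | zero => exact ⟨0, 0, by simp⟩
    | add x y hx hy ihx ihy =>
      obtain ⟨c1, β1, h1⟩ := ihx
      obtain ⟨c2, β2, h2⟩ := ihy
      refine ⟨c1 + c2, β1 + β2, fun i => ?_⟩
      simp only [Pi.add_apply, h1 i, h2 i, add_mul, Finset.sum_add_distrib]
      ring
    | smul a x hx ih =>
      obtain ⟨c, β, h⟩ := ih
      refine ⟨a * c, fun j => a * β j, fun i => ?_⟩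
      simp only [Pi.smul_apply, smul_eq_mul, h i, mul_add, Finset.mul_sum, mul_assoc]
  · rintro ⟨c, β, hf⟩
    have hfe : f = c • (fun _ => (1 : ZMod 3)) + ∑ j ∈ Finset.range t, β j • GRow T t j := by
      funext i
      simp [hf i, Finset.sum_apply, GRow, dgt]
    rw [hfe]
    refine Submodule.add_mem _
      (Submodule.smul_mem _ _ (Submodule.subset_span (Set.mem_insert _ _)))
      (Submodule.sum_mem _ fun j hj => Submodule.smul_mem _ _ (Submodule.subset_span
        (Set.mem_insert_iff.mpr (Or.inr ⟨j, Finset.mem_range.mp hj, rfl⟩))))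

lemma sum_dgt (β : ℕ → ZMod 3) {t k l : ℕ} (hk : k < t) (hl : l < t) (hkl : k ≠ l)
    (u w : ℕ) (hu : u < 3) (hw : w < 3) :
    ∑ j ∈ Finset.range t, β j * dgt (u * 3 ^ k + w * 3 ^ l) j
      = β k * u + β l * w := by
  have h1 : ∀ j, β j * dgt (u * 3 ^ k + w * 3 ^ l) j
      = (if j = k then β j * u else 0) + (if j = l then β j * w else 0) := by
    intro j
    rw [dgt_form u w k l j hu hw hkl]
    split_ifs <;> ring
  simp only [h1, Finset.sum_add_distrib]
  rw [Finset.sum_ite_eq' (Finset.range t) k (fun j => β j * u),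
    Finset.sum_ite_eq' (Finset.range t) l (fun j => β j * w),
    if_pos (Finset.mem_range.mpr hk), if_pos (Finset.mem_range.mpr hl)]

lemma sum_dgt_single (β : ℕ → ZMod 3) {t k : ℕ} (hk : k < t) (u : ℕ) (hu : u < 3) :
    ∑ j ∈ Finset.range t, β j * dgt (u * 3 ^ k) j = β k * u := by
  have h1 : ∀ j, β j * dgt (u * 3 ^ k) j = (if j = k then β j * u else 0) := by
    intro j
    rw [dgt_single u k j hu]
    split_ifs <;> ring
  simp only [h1]
  rw [Finset.sum_ite_eq' (Finset.range t) k (fun j => β j * u),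
    if_pos (Finset.mem_range.mpr hk)]

lemma sum_dgt_zero (β : ℕ → ZMod 3) (t : ℕ) :
    ∑ j ∈ Finset.range t, β j * dgt 0 j = 0 := by
  simp [dgt_zero]

lemma probe_lt {t k l u : ℕ} (hk : k < t) (hl : l < t) (hkl : k ≠ l) (hu : u < 3) :
    3 ^ k + u * 3 ^ l < 3 ^ t := by
  have ht : 2 ≤ t := by omega
  have p2 : (0:ℕ) < 3 ^ (t-2) := pow_pos (by norm_num) _
  have e1 : (3:ℕ) ^ (t-1) = 3 * 3 ^ (t-2) := by rw [← pow_succ']; congr 1; omega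
  have e2 : (3:ℕ) ^ t = 3 * 3 ^ (t-1) := by rw [← pow_succ']; congr 1; omega
  rcases lt_or_gt_of_ne hkl with h | h
  · have b1 : (3:ℕ) ^ k ≤ 3 ^ (t-2) := Nat.pow_le_pow_right (by norm_num) (by omega)
    have b2 : (3:ℕ) ^ l ≤ 3 ^ (t-1) := Nat.pow_le_pow_right (by norm_num) (by omega)
    have b3 : u * 3 ^ l ≤ 2 * 3 ^ (t-1) := Nat.mul_le_mul (by omega) b2
    omega
  · have b1 : (3:ℕ) ^ k ≤ 3 ^ (t-1) := Nat.pow_le_pow_right (by norm_num) (by omega)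
    have b2 : (3:ℕ) ^ l ≤ 3 ^ (t-2) := Nat.pow_le_pow_right (by norm_num) (by omega)
    have b3 : u * 3 ^ l ≤ 2 * 3 ^ (t-2) := Nat.mul_le_mul (by omega) b2
    omega


/-- For any `t ≥ 0` and `T > 3` divisible by `3^t`, there is a permutation `π` of the
`T` coordinates such that `G(T,t)` and `π(G(T,t))` intersect exactly in the
one-dimensional subspace spanned by the all-one vector. -/
theorem gspace_perm_intersection (t T : ℕ) (hT : 3 < T) (hdvd : 3 ^ t ∣ T) :
    ∃ π : Equiv.Perm (Fin T),
      GSpace T t ⊓ (GSpace T t).map (LinearMap.funLeft (ZMod 3) (ZMod 3) π) =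
        Submodule.span (ZMod 3) {(fun _ => (1 : ZMod 3) : Fin T → ZMod 3)} := by
  set m := T / 3 ^ t with hm_def
  have hTm : 3 ^ t * m = T := Nat.mul_div_cancel' hdvd
  have hm : 0 < m := by
    rcases Nat.eq_zero_or_pos m with h | h
    · rw [h, mul_zero] at hTm; omega
    · exact h
  have hbound : ∀ i : Fin T, swapF t m (i : ℕ) < T := by
    intro i
    have h1 : (i : ℕ) < 3 ^ t * m := by rw [hTm]; exact i.isLt
    have := swapF_lt h1
    omega
  have hinv : Function.Involutive (fun i : Fin T => (⟨swapF t m i, hbound i⟩ : Fin T)) := by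
    intro i
    apply Fin.ext
    simp [swapF_invol hm]
  refine ⟨hinv.toPerm _, le_antisymm ?_ ?_⟩
  · -- hard direction
    intro v hv
    rw [Submodule.mem_inf] at hv
    obtain ⟨hv1, hv2⟩ := hv
    rw [gspace_mem_iff] at hv1
    obtain ⟨c, β, hβ⟩ := hv1
    obtain ⟨w, hw, hvw⟩ := Submodule.mem_map.mp hv2
    rw [gspace_mem_iff] at hw
    obtain ⟨c', β', hβ'⟩ := hw
    simp only [← hm_def] at hβ hβ'
    have key : ∀ i : Fin T, v i = w ⟨swapF t m i, hbound i⟩ := by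
      intro i
      rw [← hvw]
      rfl
    have eqn : ∀ n, (hn : n < T) →
        c + ∑ j ∈ Finset.range t, β j * dgt (n / m) j
          = c' + ∑ j ∈ Finset.range t, β' j * dgt (swapF t m n / m) j := by
      intro n hn
      have h1 := hβ ⟨n, hn⟩
      have h2 := hβ' ⟨swapF t m n, hbound ⟨n, hn⟩⟩
      have h3 := key ⟨n, hn⟩
      simp only [Fin.val_mk] at h1 h2 h3 ⊢
      rw [← h1, h3, h2]
    -- c = c'
    have hcc : c = c' := by
      have e0 := eqn 0 (by omega)
      have hs : swapF t m 0 = 0 := by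
        apply swapF_id
        · rintro ⟨k, hk, he⟩
          have : (0:ℕ) < 3 ^ k * m := by positivity
          omega
        · rintro ⟨k, hk, he⟩
          have : (0:ℕ) < 2 * (3 ^ k * m) := by positivity
          omega
      rw [hs, Nat.zero_div, sum_dgt_zero, sum_dgt_zero] at e0
      simpa using e0
    -- β k = 2 β' k
    have hkey : ∀ k, k < t → β k * 1 = β' k * 2 := by
      intro k hk
      have hlt : 3 ^ k * m < T := by
        rw [← hTm]
        exact Nat.mul_lt_mul_of_lt_of_le
          (Nat.pow_lt_pow_right (by norm_num) hk) (le_refl m) hm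
      have e1 := eqn (3 ^ k * m) hlt
      rw [swapF_A hk, Nat.mul_div_cancel _ hm, ← mul_assoc,
        Nat.mul_div_cancel _ hm] at e1
      have d1 : ∑ j ∈ Finset.range t, β j * dgt (3 ^ k) j = β k * 1 := by
        have := sum_dgt_single β hk 1 (by norm_num)
        rwa [one_mul] at this
      have d2 : ∑ j ∈ Finset.range t, β' j * dgt (2 * 3 ^ k) j = β' k * 2 := by
        have := sum_dgt_single β' hk 2 (by norm_num)
        simpa using this
      rw [d1, d2, hcc] at e1
      exact add_left_cancel e1
    -- β k = β' k
    have hsame : ∀ k, k < t → β k = β' k := by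
      intro k hk
      rcases eq_or_ne t 1 with rfl | ht1
      · -- t = 1, so k = 0, m ≥ 2
        have hk0 : k = 0 := by omega
        subst hk0
        have hm2 : 2 ≤ m := by
          rcases Nat.eq_zero_or_pos m with h | h
          · omega
          · by_contra hc
            have : m = 1 := by omega
            rw [this] at hTm
            simp at hTm
            omega
        have hn : m + 1 < T := by
          rw [← hTm]; simp; omega
        have e1 := eqn (m + 1) hn
        have hs : swapF 1 m (m + 1) = m + 1 := by
          apply swapF_id
          · rintro ⟨k, hk', he⟩
            interval_cases k
            rw [pow_zero, one_mul] at he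
            omega
          · rintro ⟨k, hk', he⟩
            interval_cases k
            rw [pow_zero, one_mul] at he
            omega
        have hd : (m + 1) / m = 1 := by
          rw [Nat.div_eq_of_lt_le] <;> omega
        rw [hs, hd] at e1
        have d1 : ∑ j ∈ Finset.range 1, β j * dgt 1 j = β 0 * 1 := by
          have := sum_dgt_single β (show 0 < 1 by norm_num) 1 (by norm_num)
          simpa using this
        have d1' : ∑ j ∈ Finset.range 1, β' j * dgt 1 j = β' 0 * 1 := by
          have := sum_dgt_single β' (show 0 < 1 by norm_num) 1 (by norm_num)
          simpa using this
        rw [d1, d1', hcc] at e1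
        have := add_left_cancel e1
        simpa using this
      · -- t ≥ 2
        have ht2 : 2 ≤ t := by
          rcases Nat.eq_zero_or_pos t with h | h
          · omega
          · omega
        set l := if k = 0 then 1 else 0 with hl_def
        have hl : l < t := by
          rw [hl_def]; split_ifs <;> omega
        have hkl : k ≠ l := by
          rw [hl_def]; split_ifs with h <;> omega
        have probe : ∀ u : ℕ, u = 1 ∨ u = 2 →
            c + (β k * 1 + β l * u) = c' + (β' k * 1 + β' l * u) := by
          intro u hu
          have hu3 : u < 3 := by omega
          have hblt : 1 * 3 ^ k + u * 3 ^ l < 3 ^ t := by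
            rw [one_mul]; exact probe_lt hk hl hkl hu3
          have hnlt : (1 * 3 ^ k + u * 3 ^ l) * m < T := by
            rw [← hTm]
            exact Nat.mul_lt_mul_of_lt_of_le hblt (le_refl m) hm
          have e1 := eqn ((1 * 3 ^ k + u * 3 ^ l) * m) hnlt
          have hs : swapF t m ((1 * 3 ^ k + u * 3 ^ l) * m) = (1 * 3 ^ k + u * 3 ^ l) * m := by
            apply swapF_id
            · rintro ⟨j, hj, he⟩
              have := Nat.eq_of_mul_eq_mul_right hm he
              rw [one_mul] at this
              exact pow3_probe k l j u 1 hkl hu (Or.inl rfl) (by omega)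
            · rintro ⟨j, hj, he⟩
              rw [← mul_assoc] at he
              have := Nat.eq_of_mul_eq_mul_right hm he
              rw [one_mul] at this
              exact pow3_probe k l j u 2 hkl hu (Or.inr rfl) this
          rw [hs, Nat.mul_div_cancel _ hm] at e1
          rw [sum_dgt β hk hl hkl 1 u (by norm_num) hu3,
            sum_dgt β' hk hl hkl 1 u (by norm_num) hu3] at e1
          simpa using e1
        have p1 := probe 1 (Or.inl rfl)
        have p2 := probe 2 (Or.inr rfl)
        have hcast1 : ((1:ℕ) : ZMod 3) = 1 := by norm_num
        have hcast2 : ((2:ℕ) : ZMod 3) = 2 := by norm_num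
        rw [hcast1] at p1
        rw [hcast2] at p2
        linear_combination 2 * p1 - p2 - hcc
    have hzero : ∀ k, k < t → β k = 0 := by
      intro k hk
      have h1 := hkey k hk
      have h2 := hsame k hk
      linear_combination 2 * h2 - h1 + h2 * 0
    rw [Submodule.mem_span_singleton]
    refine ⟨c, ?_⟩
    funext i
    have : v i = c := by
      rw [hβ i, Finset.sum_eq_zero, add_zero]
      intro j hj
      rw [hzero j (Finset.mem_range.mp hj), zero_mul]
    rw [this]
    simp
  · -- easy direction
    rw [Submodule.span_le]
    rintro x hx
    rcases Set.mem_singleton_iff.mp hx with rfl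
    rw [SetLike.mem_coe, Submodule.mem_inf]
    constructor
    · exact Submodule.subset_span (Set.mem_insert _ _)
    · exact Submodule.mem_map.mpr ⟨_, Submodule.subset_span (Set.mem_insert _ _), rfl⟩
end
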